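/- arXiv:2007.06736 — 7 statements merged into one kernel-verified Lean document; each statement's English description precedes it below -/
import Mathlib

section
/- Let A be a vector space over a field K of characteristic ≠ 2 equipped with an antiassociative bilinear product · (i.e. (x·y)·z = −x·(y·z) for all x,y,z ∈ A). Then the anticommutator product x⋄y := (1/2)(x·y + y·x) makes A a Jacobi–Jordan algebra: ⋄ is commutative and satisfies (x⋄y)⋄z + (z⋄x)⋄y + (y⋄z)⋄x = 0 for all x,y,z ∈ A. -/
/-- If `(A, mul)` is an antiassociative algebra over a field `K` of characteristic ≠ 2
(i.e. `(2 : K) ≠ 0`), then the anticommutator `d x y = (1/2) • (x·y + y·x)` makes `A`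
a Jacobi–Jordan algebra: `d` is commutative and satisfies the Jacobi identity. -/
theorem stmt_0 {K A : Type*} [Field K] [AddCommGroup A] [Module K A]
    (h2 : (2 : K) ≠ 0)
    (mul : A →ₗ[K] A →ₗ[K] A)
    (anti : ∀ x y z : A, mul (mul x y) z = - mul x (mul y z))
    (d : A → A → A)
    (hd : ∀ x y : A, d x y = (2 : K)⁻¹ • (mul x y + mul y x)) :
    (∀ x y : A, d x y = d y x) ∧
    (∀ x y z : A, d (d x y) z + d (d z x) y + d (d y z) x = 0) := by
  constructor
  · intro x y
    rw [hd, hd, add_comm]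
  · intro x y z
    simp only [hd, map_add, map_smul, LinearMap.add_apply, LinearMap.smul_apply,
      anti, smul_neg, smul_add, smul_smul]
    module
end

section
/- Let (G,⋄) and (H,•) be Jacobi–Jordan algebras over a field K of characteristic ≠ 2, 3, and let μ : H → End(G) and ρ : G → End(H) be representations of H and G respectively. Define on G ⊕ H the commutative bilinear product (x,a)∗(y,b) := (x⋄y + μ(a)y + μ(b)x, a•b + ρ(x)b + ρ(y)a). Then (G ⊕ H, ∗) is a Jacobi–Jordan algebra if and only if for all x,y ∈ G and a,b ∈ H: (1) ρ(x)(a•b) + (ρ(x)a)•b + a•(ρ(x)b) + ρ(μ(a)x)b + ρ(μ(b)x)a = 0, and (2) μ(a)(x⋄y) + (μ(a)x)⋄y + x⋄(μ(a)y) + μ(ρ(x)a)y + μ(ρ(y)a)x = 0. -/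
/-- Matched pairs of Jacobi–Jordan algebras: given JJ algebras `(G, mulG)` and `(H, mulH)`
and representations `μ : H → End(G)`, `ρ : G → End(H)`, the product
`(x,a) ∗ (y,b) = (x⋄y + μ(a)y + μ(b)x, a•b + ρ(x)b + ρ(y)a)` makes `G ⊕ H` a
Jacobi–Jordan algebra iff the two matched-pair equations hold. -/
theorem stmt_4 {K G H : Type*} [Field K] (h2 : (2 : K) ≠ 0) (h3 : (3 : K) ≠ 0)
    [AddCommGroup G] [Module K G] [AddCommGroup H] [Module K H]
    (mulG : G →ₗ[K] G →ₗ[K] G)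
    (hGcomm : ∀ x y : G, mulG x y = mulG y x)
    (hGjac : ∀ x y z : G, mulG (mulG x y) z + mulG (mulG z x) y + mulG (mulG y z) x = 0)
    (mulH : H →ₗ[K] H →ₗ[K] H)
    (hHcomm : ∀ a b : H, mulH a b = mulH b a)
    (hHjac : ∀ a b c : H, mulH (mulH a b) c + mulH (mulH c a) b + mulH (mulH b c) a = 0)
    (μ : H →ₗ[K] Module.End K G)
    (hμ : ∀ a b : H, μ (mulH a b) = - (μ a ∘ₗ μ b) - (μ b ∘ₗ μ a))
    (ρ : G →ₗ[K] Module.End K H)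
    (hρ : ∀ x y : G, ρ (mulG x y) = - (ρ x ∘ₗ ρ y) - (ρ y ∘ₗ ρ x))
    (star : G × H → G × H → G × H)
    (hstar : ∀ p q : G × H, star p q =
      (mulG p.1 q.1 + μ p.2 q.1 + μ q.2 p.1, mulH p.2 q.2 + ρ p.1 q.2 + ρ q.1 p.2)) :
    ((∀ p q : G × H, star p q = star q p) ∧
     (∀ p q r : G × H, star (star p q) r + star (star r p) q + star (star q r) p = 0)) ↔
    ((∀ (x : G) (a b : H),
        ρ x (mulH a b) + mulH (ρ x a) b + mulH a (ρ x b) + ρ (μ a x) b + ρ (μ b x) a = 0) ∧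
     (∀ (a : H) (x y : G),
        μ a (mulG x y) + mulG (μ a x) y + mulG x (μ a y) + μ (ρ x a) y + μ (ρ y a) x = 0)) := by

  constructor
  · rintro ⟨hc, hj⟩
    refine ⟨fun x a b => ?_, fun a x y => ?_⟩
    · have h := (hj (x, 0) (0, a) (0, b))
      simp only [hstar, map_zero, LinearMap.zero_apply, add_zero, zero_add,
        Prod.mk_add_mk, Prod.mk_eq_zero] at h
      rw [hHcomm a (ρ x b), ← h.2]; abel
    · have h := (hj (0, a) (x, 0) (y, 0))
      simp only [hstar, map_zero, LinearMap.zero_apply, add_zero, zero_add,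
        Prod.mk_add_mk, Prod.mk_eq_zero] at h
      rw [hGcomm x (μ a y), ← h.1]; abel
  · rintro ⟨h1, h2c⟩
    constructor
    · intro p q
      simp only [hstar, Prod.mk.injEq]
      exact ⟨by rw [hGcomm]; abel, by rw [hHcomm]; abel⟩
    · rintro ⟨x, a⟩ ⟨y, b⟩ ⟨z, c⟩
      simp only [hstar, map_add, LinearMap.add_apply, Prod.mk_add_mk, Prod.mk_eq_zero]
      constructor
      · have t2 : (μ (mulH a b)) z = -(μ a (μ b z)) - μ b (μ a z) := by
          rw [hμ]; simp [LinearMap.sub_apply, LinearMap.neg_apply, LinearMap.comp_apply]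
        have t3 : (μ (mulH c a)) y = -(μ c (μ a y)) - μ a (μ c y) := by
          rw [hμ]; simp [LinearMap.sub_apply, LinearMap.neg_apply, LinearMap.comp_apply]
        have t4 : (μ (mulH b c)) x = -(μ b (μ c x)) - μ c (μ b x) := by
          rw [hμ]; simp [LinearMap.sub_apply, LinearMap.neg_apply, LinearMap.comp_apply]
        have t5 : μ a (mulG y z) = -(mulG (μ a y) z + mulG y (μ a z) + μ (ρ y a) z + μ (ρ z a) y) := by
          apply eq_neg_of_add_eq_zero_left
          rw [← h2c a y z]; abel
        have t6 : μ b (mulG z x) = -(mulG (μ b z) x + mulG z (μ b x) + μ (ρ z b) x + μ (ρ x b) z) := by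
          apply eq_neg_of_add_eq_zero_left
          rw [← h2c b z x]; abel
        have t7 : μ c (mulG x y) = -(mulG (μ c x) y + mulG x (μ c y) + μ (ρ x c) y + μ (ρ y c) x) := by
          apply eq_neg_of_add_eq_zero_left
          rw [← h2c c x y]; abel
        rw [hGcomm (μ a z) y, hGcomm (μ b x) z, hGcomm (μ c y) x, t2, t3, t4, t5, t6, t7,
          ← hGjac x y z]
        abel
      · have t2 : (ρ (mulG x y)) c = -(ρ x (ρ y c)) - ρ y (ρ x c) := by
          rw [hρ]; simp [LinearMap.sub_apply, LinearMap.neg_apply, LinearMap.comp_apply]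
        have t3 : (ρ (mulG z x)) b = -(ρ z (ρ x b)) - ρ x (ρ z b) := by
          rw [hρ]; simp [LinearMap.sub_apply, LinearMap.neg_apply, LinearMap.comp_apply]
        have t4 : (ρ (mulG y z)) a = -(ρ y (ρ z a)) - ρ z (ρ y a) := by
          rw [hρ]; simp [LinearMap.sub_apply, LinearMap.neg_apply, LinearMap.comp_apply]
        have t5 : ρ x (mulH b c) = -(mulH (ρ x b) c + mulH b (ρ x c) + ρ (μ b x) c + ρ (μ c x) b) := by
          apply eq_neg_of_add_eq_zero_left
          rw [← h1 x b c]; abel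
        have t6 : ρ y (mulH c a) = -(mulH (ρ y c) a + mulH c (ρ y a) + ρ (μ c y) a + ρ (μ a y) c) := by
          apply eq_neg_of_add_eq_zero_left
          rw [← h1 y c a]; abel
        have t7 : ρ z (mulH a b) = -(mulH (ρ z a) b + mulH a (ρ z b) + ρ (μ a z) b + ρ (μ b z) a) := by
          apply eq_neg_of_add_eq_zero_left
          rw [← h1 z a b]; abel
        rw [hHcomm (ρ x c) b, hHcomm (ρ y a) c, hHcomm (ρ z b) a, t2, t3, t4, t5, t6, t7,
          ← hHjac a b c]
        abel
end

section
/- Let (A,·) be a left pre-Jacobi–Jordan algebra over a field K of characteristic ≠ 2, 3. Then the anticommutator [x,y] := x·y + y·x makes A a Jacobi–Jordan algebra: [·,·] is commutative and satisfies [x,[y,z]] + [y,[z,x]] + [z,[x,y]] = 0 for all x,y,z ∈ A. -/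
/-- The anticommutator `[x,y] := x·y + y·x` of a left pre-Jacobi–Jordan algebra over a
field of characteristic ≠ 2, 3 makes it a Jacobi–Jordan algebra. -/
theorem stmt_7 {K A : Type*} [Field K] (h2 : (2 : K) ≠ 0) (h3 : (3 : K) ≠ 0)
    [AddCommGroup A] [Module K A]
    (mul : A →ₗ[K] A →ₗ[K] A)
    (hpre : ∀ x y z : A, mul (mul x y) z + mul x (mul y z) =
      - (mul (mul y x) z + mul y (mul x z)))
    (b : A → A → A)
    (hb : ∀ x y : A, b x y = mul x y + mul y x) :
    (∀ x y : A, b x y = b y x) ∧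
    (∀ x y z : A, b x (b y z) + b y (b z x) + b z (b x y) = 0) := by
  constructor
  · intro x y
    rw [hb, hb]; abel
  · intro x y z
    have k1 : mul (mul x y) z + mul x (mul y z) +
        (mul (mul y x) z + mul y (mul x z)) = 0 := by
      rw [hpre x y z]; abel
    have k2 : mul (mul y z) x + mul y (mul z x) +
        (mul (mul z y) x + mul z (mul y x)) = 0 := by
      rw [hpre y z x]; abel
    have k3 : mul (mul z x) y + mul z (mul x y) +
        (mul (mul x z) y + mul x (mul z y)) = 0 := by
      rw [hpre z x y]; abel
    simp only [hb, map_add, LinearMap.add_apply]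
    linear_combination (norm := abel) k1 + k2 + k3
end

section
/- Let (A,·) be a left pre-Jacobi–Jordan algebra over a field K of characteristic ≠ 2, 3, and let ad_x := L_x + R_x where L_x(y) := x·y and R_x(y) := y·x. Then ad is a representation of the sub-adjacent Jacobi–Jordan algebra (A,[·,·]) with [x,y] = x·y + y·x; that is, for all x,y ∈ A, ad_{x·y+y·x} = −(ad_x∘ad_y + ad_y∘ad_x) as endomorphisms of A. -/
/-- In a left pre-Jacobi–Jordan algebra over a field of characteristic ≠ 2, 3, the map
`ad_x := L_x + R_x` is a representation of the sub-adjacent Jacobi–Jordan algebra: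
`ad_{x·y+y·x} = −(ad_x∘ad_y + ad_y∘ad_x)`. -/
theorem stmt_11 {K A : Type*} [Field K] (h2 : (2 : K) ≠ 0) (h3 : (3 : K) ≠ 0)
    [AddCommGroup A] [Module K A]
    (mul : A →ₗ[K] A →ₗ[K] A)
    (hpre : ∀ x y z : A, mul (mul x y) z + mul x (mul y z) =
      - (mul (mul y x) z + mul y (mul x z)))
    (ad : A → A →ₗ[K] A)
    (had : ∀ x : A, ad x = mul x + mul.flip x) :
    ∀ x y : A, ad (mul x y + mul y x) = - (ad x ∘ₗ ad y + ad y ∘ₗ ad x) := by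
  intro x y
  ext z
  simp only [had, LinearMap.add_apply, LinearMap.flip_apply, LinearMap.comp_apply,
    LinearMap.neg_apply, map_add]
  linear_combination (norm := module) hpre x y z + hpre z x y + hpre z y x
end

section
/- Let (A,·) be a left pre-Jacobi–Jordan algebra over a field K of characteristic ≠ 2, 3, let V be a K-vector space, and let l, r : A → End(V) be linear maps. Define on A ⊕ V the bilinear product (x,u)∗(y,v) := (x·y, l_x(v) + r_y(u)). Then (A ⊕ V, ∗) is a left pre-Jacobi–Jordan algebra if and only if for all x,y ∈ A: (1) l_{x·y} + l_x∘l_y = −l_{y·x} − l_y∘l_x, and (2) l_x∘r_y + r_y∘l_x = −r_y∘r_x − r_{x·y}. -/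
/-!
The `V`-component of the antiassociator of `(x, u), (y, v), (z, w)` in `A ⊕ V` is
`(l_{xy} + l_x l_y) w + (l_x r_z + r_z l_x) v + (r_z r_y + r_{yz}) u`, one term per entry of `V`,
so left antisymmetry can be tested on triples with a single nonzero `V`-entry: `w` gives (1),
`v` gives (2), and the `u`-term is again (2), now read with `y` in place of `x`.
-/

def antiassoc {α : Type*} [Add α] (f : α → α → α) (x y z : α) : α :=
  f (f x y) z + f x (f y z)

def IsLeftPreJJ {α : Type*} [Add α] [Neg α] (f : α → α → α) : Prop :=
  ∀ x y z, antiassoc f x y z = -antiassoc f y x z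

section Extension

variable {K A V : Type*} [CommRing K] [AddCommGroup A] [Module K A] [AddCommGroup V] [Module K V]
  (mul : A →ₗ[K] A →ₗ[K] A) (l r : A →ₗ[K] Module.End K V)

def extProd (p q : A × V) : A × V :=
  (mul p.1 q.1, l p.1 q.2 + r q.1 p.2)

def IsBimodule : Prop :=
  (∀ x y : A, l (mul x y) + l x ∘ₗ l y = - l (mul y x) - l y ∘ₗ l x) ∧
  (∀ x y : A, l x ∘ₗ r y + r y ∘ₗ l x = - (r y ∘ₗ r x) - r (mul x y))

theorem antiassoc_extProd (x y z : A) (u v w : V) :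
    antiassoc (extProd mul l r) (x, u) (y, v) (z, w) =
      (antiassoc (fun a b => mul a b) x y z,
        (l (mul x y) + l x ∘ₗ l y) w + (l x ∘ₗ r z + r z ∘ₗ l x) v +
          (r z ∘ₗ r y + r (mul y z)) u) := by
  simp only [antiassoc, extProd, map_add, Prod.mk_add_mk, LinearMap.add_apply,
    LinearMap.comp_apply]
  congr 1
  abel

theorem IsBimodule.of_isLeftPreJJ_extProd (h : IsLeftPreJJ (extProd mul l r)) :
    IsBimodule mul l r := by
  refine ⟨fun x y => ?_, fun x y => ?_⟩ <;> rw [← neg_add'] <;> ext v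
  · simpa only [antiassoc_extProd, map_zero, add_zero, Prod.snd_neg, LinearMap.neg_apply] using
      congrArg Prod.snd (h (x, 0) (y, 0) (0, v))
  · simpa only [antiassoc_extProd, map_zero, add_zero, zero_add, Prod.snd_neg,
      LinearMap.neg_apply] using
      congrArg Prod.snd (h (x, 0) (0, v) (y, 0))

theorem IsBimodule.isLeftPreJJ_extProd (hpre : IsLeftPreJJ (fun a b : A => mul a b))
    (h : IsBimodule mul l r) : IsLeftPreJJ (extProd mul l r) := by
  rintro ⟨x, u⟩ ⟨y, v⟩ ⟨z, w⟩
  obtain ⟨hl, hr⟩ := h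
  simp only [antiassoc_extProd, Prod.neg_mk]
  refine Prod.ext (hpre x y z) ?_
  rw [hl x y, hr x z, hr y z]
  simp only [LinearMap.sub_apply, LinearMap.neg_apply, LinearMap.add_apply]
  abel

theorem isLeftPreJJ_extProd_iff (hpre : IsLeftPreJJ (fun a b : A => mul a b)) :
    IsLeftPreJJ (extProd mul l r) ↔ IsBimodule mul l r :=
  ⟨IsBimodule.of_isLeftPreJJ_extProd mul l r, IsBimodule.isLeftPreJJ_extProd mul l r hpre⟩

end Extension

theorem stmt_12_general {K A V : Type*} [Field K]
    [AddCommGroup A] [Module K A] [AddCommGroup V] [Module K V]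
    (mul : A →ₗ[K] A →ₗ[K] A)
    (hpre : ∀ x y z : A, mul (mul x y) z + mul x (mul y z) =
      - (mul (mul y x) z + mul y (mul x z)))
    (l r : A →ₗ[K] Module.End K V)
    (star : A × V → A × V → A × V)
    (hstar : ∀ p q : A × V, star p q = (mul p.1 q.1, l p.1 q.2 + r q.1 p.2)) :
    (∀ p q s : A × V, star (star p q) s + star p (star q s) =
      - (star (star q p) s + star q (star p s))) ↔
    ((∀ x y : A, l (mul x y) + l x ∘ₗ l y = - l (mul y x) - l y ∘ₗ l x) ∧
     (∀ x y : A, l x ∘ₗ r y + r y ∘ₗ l x = - (r y ∘ₗ r x) - r (mul x y))) := by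
  obtain rfl : star = extProd mul l r := funext₂ hstar
  exact isLeftPreJJ_extProd_iff mul l r hpre

/-- For a left pre-Jacobi–Jordan algebra `(A, mul)` over a field of characteristic ≠ 2, 3,
a vector space `V` and linear maps `l, r : A → End(V)`, the product
`(x,u) ∗ (y,v) = (x·y, l_x v + r_y u)` makes `A ⊕ V` a left pre-Jacobi–Jordan algebra iff
`(l, r, V)` is a bimodule of `A`. -/
theorem stmt_12 {K A V : Type*} [Field K] (h2 : (2 : K) ≠ 0) (h3 : (3 : K) ≠ 0)
    [AddCommGroup A] [Module K A] [AddCommGroup V] [Module K V]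
    (mul : A →ₗ[K] A →ₗ[K] A)
    (hpre : ∀ x y z : A, mul (mul x y) z + mul x (mul y z) =
      - (mul (mul y x) z + mul y (mul x z)))
    (l r : A →ₗ[K] Module.End K V)
    (star : A × V → A × V → A × V)
    (hstar : ∀ p q : A × V, star p q = (mul p.1 q.1, l p.1 q.2 + r q.1 p.2)) :
    (∀ p q s : A × V, star (star p q) s + star p (star q s) =
      - (star (star q p) s + star q (star p s))) ↔
    ((∀ x y : A, l (mul x y) + l x ∘ₗ l y = - l (mul y x) - l y ∘ₗ l x) ∧
     (∀ x y : A, l x ∘ₗ r y + r y ∘ₗ l x = - (r y ∘ₗ r x) - r (mul x y))) :=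
  stmt_12_general mul hpre l r star hstar
end

section
/- Let A be a finite-dimensional vector space over a field K of characteristic ≠ 2, 3, equipped with bilinear products · on A and ∘ on the dual space A*. Define the maps R*_·, L*_· : A → End(A*) by ⟨R*_·(x)f, y⟩ := ⟨f, y·x⟩, ⟨L*_·(x)f, y⟩ := ⟨f, x·y⟩, and R*_∘, L*_∘ : A* → End(A) by ⟨g, R*_∘(f)x⟩ := ⟨g∘f, x⟩, ⟨g, L*_∘(f)x⟩ := ⟨f∘g, x⟩. Define on A ⊕ A* the product (x,a)∗(y,b) := (x·y + R*_∘(a)y + L*_∘(b)x, a∘b + R*_·(x)b + L*_·(y)a), and the symmetric bilinear form B((x,a),(y,b)) := ⟨a,y⟩ + ⟨b,x⟩. Then B is invariant for ∗: B((x,a)∗(y,b), (z,c)) = B((x,a), (y,b)∗(z,c)) for all x,y,z ∈ A and a,b,c ∈ A*. -/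
/-- Invariance of the natural bilinear form in the double construction of a symmetric
pre-Jacobi–Jordan algebra: for bilinear products `mulA` on a finite-dimensional space `A`
and `mulD` on its dual `A*`, with dual maps `R*_·, L*_· : A → End(A*)` and
`R*_∘, L*_∘ : A* → End(A)` given by the pairing identities, the form
`B((x,a),(y,b)) = ⟨a,y⟩ + ⟨b,x⟩` is invariant for the product
`(x,a)∗(y,b) = (x·y + R*_∘(a)y + L*_∘(b)x, a∘b + R*_·(x)b + L*_·(y)a)`. -/
theorem stmt_18 {K A : Type*} [Field K] (h2 : (2 : K) ≠ 0) (h3 : (3 : K) ≠ 0)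
    [AddCommGroup A] [Module K A] [FiniteDimensional K A]
    (mulA : A →ₗ[K] A →ₗ[K] A)
    (mulD : Module.Dual K A →ₗ[K] Module.Dual K A →ₗ[K] Module.Dual K A)
    (Rd Ld : A →ₗ[K] Module.End K (Module.Dual K A))
    (hRd : ∀ (x : A) (f : Module.Dual K A) (y : A), Rd x f y = f (mulA y x))
    (hLd : ∀ (x : A) (f : Module.Dual K A) (y : A), Ld x f y = f (mulA x y))
    (Ro Lo : Module.Dual K A →ₗ[K] Module.End K A)
    (hRo : ∀ (f : Module.Dual K A) (x : A) (g : Module.Dual K A), g (Ro f x) = mulD g f x)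
    (hLo : ∀ (f : Module.Dual K A) (x : A) (g : Module.Dual K A), g (Lo f x) = mulD f g x)
    (star : A × Module.Dual K A → A × Module.Dual K A → A × Module.Dual K A)
    (hstar : ∀ p q : A × Module.Dual K A, star p q =
      (mulA p.1 q.1 + Ro p.2 q.1 + Lo q.2 p.1, mulD p.2 q.2 + Rd p.1 q.2 + Ld q.1 p.2))
    (Bf : A × Module.Dual K A → A × Module.Dual K A → K)
    (hBf : ∀ p q : A × Module.Dual K A, Bf p q = p.2 q.1 + q.2 p.1) :
    ∀ p q s : A × Module.Dual K A, Bf (star p q) s = Bf p (star q s) := by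
  intro p q s
  simp only [hstar, hBf, LinearMap.add_apply, map_add, hRd, hLd, hRo, hLo]
  ring
end

section
/- Let J be a finite-dimensional vector space over a field K of characteristic ≠ 2, 3, equipped with commutative bilinear products ⋄ on J and • on the dual space J*. Define L*_⋄ : J → End(J*) by ⟨L*_⋄(x)f, y⟩ := ⟨f, x⋄y⟩ and L*_• : J* → End(J) by ⟨g, L*_•(f)x⟩ := ⟨f•g, x⟩. Define on J ⊕ J* the product (x,a)∗(y,b) := (x⋄y + L*_•(a)y + L*_•(b)x, a•b + L*_⋄(x)b + L*_⋄(y)a), and the symmetric bilinear form B((x,a),(y,b)) := ⟨a,y⟩ + ⟨b,x⟩. Then B is invariant for ∗: B((x,a)∗(y,b), (z,c)) = B((x,a), (y,b)∗(z,c)) for all x,y,z ∈ J and a,b,c ∈ J*. -/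
/-- Invariance of the natural bilinear form in the double construction of a symmetric
Jacobi–Jordan algebra: for commutative bilinear products `mulJ` on a finite-dimensional
space `J` and `mulD` on its dual `J*`, with dual maps `L*_⋄ : J → End(J*)` and
`L*_• : J* → End(J)` given by the pairing identities, the form
`B((x,a),(y,b)) = ⟨a,y⟩ + ⟨b,x⟩` is invariant for the product
`(x,a)∗(y,b) = (x⋄y + L*_•(a)y + L*_•(b)x, a•b + L*_⋄(x)b + L*_⋄(y)a)`. -/
theorem stmt_19 {K J : Type*} [Field K] (h2 : (2 : K) ≠ 0) (h3 : (3 : K) ≠ 0)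
    [AddCommGroup J] [Module K J] [FiniteDimensional K J]
    (mulJ : J →ₗ[K] J →ₗ[K] J)
    (hJcomm : ∀ x y : J, mulJ x y = mulJ y x)
    (mulD : Module.Dual K J →ₗ[K] Module.Dual K J →ₗ[K] Module.Dual K J)
    (hDcomm : ∀ a b : Module.Dual K J, mulD a b = mulD b a)
    (Ld : J →ₗ[K] Module.End K (Module.Dual K J))
    (hLd : ∀ (x : J) (f : Module.Dual K J) (y : J), Ld x f y = f (mulJ x y))
    (Lo : Module.Dual K J →ₗ[K] Module.End K J)
    (hLo : ∀ (f : Module.Dual K J) (x : J) (g : Module.Dual K J), g (Lo f x) = mulD f g x)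
    (star : J × Module.Dual K J → J × Module.Dual K J → J × Module.Dual K J)
    (hstar : ∀ p q : J × Module.Dual K J, star p q =
      (mulJ p.1 q.1 + Lo p.2 q.1 + Lo q.2 p.1, mulD p.2 q.2 + Ld p.1 q.2 + Ld q.1 p.2))
    (Bf : J × Module.Dual K J → J × Module.Dual K J → K)
    (hBf : ∀ p q : J × Module.Dual K J, Bf p q = p.2 q.1 + q.2 p.1) :
    ∀ p q s : J × Module.Dual K J, Bf (star p q) s = Bf p (star q s) := by
  intro p q s
  simp only [hstar, hBf, map_add, LinearMap.add_apply, hLd, hLo]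
  rw [hJcomm q.1 s.1, hDcomm q.2 s.2, hJcomm p.1 q.1, hDcomm p.2 q.2, hJcomm p.1 s.1, hDcomm p.2 s.2]
  ring
end
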